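/- Let J be a nonempty order ideal of the product of chains C_d = [d_1]×…×[d_k]. Then the simplicial complex M_d(J) is flag if and only if J is a flag simplicial complex, i.e. J is an order ideal of [2]^k (every coordinate of every element of J is at most 2) which is flag as a multicomplex. -/

import Mathlib

/-- Membership in the product of chains `C_d = [d 1] × … × [d k]`. -/
def MemChainProd {k : ℕ} (d : Fin k → ℕ) (x : Fin k → ℕ) : Prop :=
  ∀ i, 1 ≤ x i ∧ x i ≤ d i

/-- The facet `F_x = ⋃_{i=1}^k ([d i] \ {d i + 1 - x i}) × {i}` of the M-complex. -/
def facetOf {k : ℕ} (d : Fin k → ℕ) (x : Fin k → ℕ) : Finset (ℕ × Fin k) :=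
  Finset.univ.biUnion fun i =>
    ((Finset.Icc 1 (d i)).erase (d i + 1 - x i)).image fun a => (a, i)

/-- The simplicial complex `M_d(J)`: all faces, i.e. all subsets of the facets `F_x`, `x ∈ J`. -/
def facesMd {k : ℕ} (d : Fin k → ℕ) (J : Finset (Fin k → ℕ)) : Finset (Finset (ℕ × Fin k)) :=
  J.biUnion fun x => (facetOf d x).powerset

/-- A (finite) simplicial complex `X` is flag if every minimal non-face has cardinality
at most 2.  Here `X.sup id` is the vertex set of `X`, and a minimal non-face is a set of
vertices which is not a face but all of whose proper subsets are faces. -/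
def IsFlagC {V : Type*} [DecidableEq V] (X : Finset (Finset V)) : Prop :=
  ∀ G : Finset V, G ⊆ X.sup id → G ∉ X → (∀ G' ⊂ G, G' ∈ X) → G.card ≤ 2

/-- `J` is a flag simplicial complex, viewed as a multicomplex: `J` is contained in
`[2]^k`, and either `J` is all of `[2]^k` or every minimal element `x` of `[2]^k \ J`
has rank `ρ x = Σ_i (x i - 1) ≤ 2`. -/
def IsFlagMulticomplex {k : ℕ} (J : Finset (Fin k → ℕ)) : Prop :=
  (∀ x ∈ J, ∀ i, x i ≤ 2) ∧
    ((∀ y : Fin k → ℕ, (∀ i, 1 ≤ y i ∧ y i ≤ 2) → y ∈ J) ∨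
      (∀ x : Fin k → ℕ, (∀ i, 1 ≤ x i ∧ x i ≤ 2) → x ∉ J →
        (∀ y : Fin k → ℕ, (∀ i, 1 ≤ y i ∧ y i ≤ 2) → y ∉ J → y ≤ x → y = x) →
        (∑ i, (x i - 1)) ≤ 2))

lemma mem_facetOf {k : ℕ} {d x : Fin k → ℕ} {a : ℕ} {i : Fin k} :
    (a, i) ∈ facetOf d x ↔ (1 ≤ a ∧ a ≤ d i) ∧ a ≠ d i + 1 - x i := by
  unfold facetOf
  simp only [Finset.mem_biUnion, Finset.mem_univ, true_and, Finset.mem_image,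
    Finset.mem_erase, Finset.mem_Icc, Prod.mk.injEq]
  constructor
  · rintro ⟨j, b, ⟨hb, hb1, hb2⟩, rfl, rfl⟩
    exact ⟨⟨hb1, hb2⟩, hb⟩
  · rintro ⟨⟨h1, h2⟩, h3⟩
    exact ⟨i, a, ⟨h3, h1, h2⟩, rfl, rfl⟩

lemma mem_facesMd {k : ℕ} {d : Fin k → ℕ} {J : Finset (Fin k → ℕ)} {G : Finset (ℕ × Fin k)} :
    G ∈ facesMd d J ↔ ∃ x ∈ J, G ⊆ facetOf d x := by
  simp [facesMd]

lemma mem_vertexSet {k : ℕ} {d : Fin k → ℕ} {J : Finset (Fin k → ℕ)} {v : ℕ × Fin k} :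
    v ∈ (facesMd d J).sup id ↔ ∃ x ∈ J, v ∈ facetOf d x := by
  rw [Finset.mem_sup]
  constructor
  · rintro ⟨G, hG, hv⟩
    obtain ⟨x, hx, hsub⟩ := mem_facesMd.1 hG
    exact ⟨x, hx, hsub hv⟩
  · rintro ⟨x, hx, hv⟩
    exact ⟨facetOf d x, mem_facesMd.2 ⟨x, hx, le_refl _⟩, hv⟩


-- forward direction, part (a)
private lemma aux_partA {k : ℕ} (d : Fin k → ℕ) (J : Finset (Fin k → ℕ))
    (hJne : J.Nonempty)
    (hJsub : ∀ x ∈ J, MemChainProd d x)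
    (hJideal : ∀ x ∈ J, ∀ y : Fin k → ℕ, MemChainProd d y → y ≤ x → y ∈ J)
    (hflag : IsFlagC (facesMd d J)) : ∀ x ∈ J, ∀ i, x i ≤ 2 := by
  intro x hx i
  by_contra h3
  push_neg at h3
  obtain ⟨t, ⟨z, hz, hzt⟩, htle⟩ : ∃ t, (∃ z ∈ J, z i = t) ∧ ∀ w ∈ J, w i ≤ t := by
    refine ⟨(J.image (fun z => z i)).max' (hJne.image _), ?_, ?_⟩
    · have := (J.image (fun z => z i)).max'_mem (hJne.image _)
      simpa using this
    · exact fun w hw => Finset.le_max' _ (w i) (Finset.mem_image_of_mem (fun z => z i) hw)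
  have ht3 : 3 ≤ t := le_trans h3 (htle x hx)
  have htd : t ≤ d i := hzt ▸ (hJsub z hz i).2
  have hu : ∀ s, 1 ≤ s → s ≤ t → (fun j => if j = i then s else 1) ∈ J := by
    intro s hs1 hst
    have hmc : MemChainProd d (fun j => if j = i then s else 1) := by
      intro j
      by_cases hj : j = i
      · subst hj; simp only [if_pos rfl]
        simp only [if_true]; omega
      · simp only [if_neg hj]
        exact ⟨le_refl _, le_trans (hJsub z hz j).1 (hJsub z hz j).2⟩
    have hle : (fun j => if j = i then s else 1) ≤ z := by
      intro j
      by_cases hj : j = i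
      · subst hj; simp only [if_pos rfl]
        simp only [if_true]; omega
      · simp only [if_neg hj]; exact (hJsub z hz j).1
    exact hJideal z hz _ hmc hle
  obtain ⟨G, hG⟩ : ∃ G : Finset (ℕ × Fin k), G = (Finset.Icc 1 t).image (fun s => (d i + 1 - s, i)) := ⟨_, rfl⟩
  have hGcard : G.card = t := by
    rw [hG, Finset.card_image_of_injOn, Nat.card_Icc]
    · omega
    · intro s hs s' hs' hss
      simp only [Finset.coe_Icc, Set.mem_Icc] at hs hs'
      have := congrArg Prod.fst hss
      simp only at this
      omega
  have hGsub : G ⊆ (facesMd d J).sup id := by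
    intro p hp
    simp only [hG, Finset.mem_image, Finset.mem_Icc] at hp
    obtain ⟨s, ⟨hs1, hs2⟩, rfl⟩ := hp
    rw [mem_vertexSet]
    obtain ⟨s', hs'1, hs'2, hss'⟩ : ∃ s', 1 ≤ s' ∧ s' ≤ t ∧ s' ≠ s := by
      rcases eq_or_ne s 1 with rfl | h
      · exact ⟨2, by omega, by omega, by omega⟩
      · exact ⟨1, le_refl _, by omega, fun e => h e.symm⟩
    refine ⟨_, hu s' hs'1 hs'2, mem_facetOf.2 ⟨⟨by omega, by omega⟩, ?_⟩⟩
    simp only [if_pos rfl, if_true]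
    omega
  have hGnf : G ∉ facesMd d J := by
    rw [mem_facesMd]
    rintro ⟨w, hw, hsub⟩
    have hwi : w i ≤ t := htle w hw
    have hw1 : 1 ≤ w i := (hJsub w hw i).1
    have hmem : (d i + 1 - w i, i) ∈ G := by
      simp only [hG, Finset.mem_image, Finset.mem_Icc]
      exact ⟨w i, ⟨hw1, hwi⟩, rfl⟩
    exact (mem_facetOf.1 (hsub hmem)).2 rfl
  have hGmin : ∀ G' ⊂ G, G' ∈ facesMd d J := by
    intro G' hG'
    obtain ⟨p, hpG, hpG'⟩ := Finset.exists_of_ssubset hG'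
    simp only [hG, Finset.mem_image, Finset.mem_Icc] at hpG
    obtain ⟨s, ⟨hs1, hs2⟩, rfl⟩ := hpG
    rw [mem_facesMd]
    refine ⟨_, hu s hs1 hs2, fun q hq => ?_⟩
    have hqG := hG'.subset hq
    simp only [hG, Finset.mem_image, Finset.mem_Icc] at hqG
    obtain ⟨s', ⟨h1, h2⟩, rfl⟩ := hqG
    have hne : s' ≠ s := by rintro rfl; exact hpG' hq
    refine mem_facetOf.2 ⟨⟨by omega, by omega⟩, ?_⟩
    simp only [if_pos rfl, if_true]
    omega
  have := hflag G hGsub hGnf hGmin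
  omega

-- forward direction, part (b): the Or.inr disjunct
private lemma aux_partB {k : ℕ} (d : Fin k → ℕ) (J : Finset (Fin k → ℕ))
    (hJne : J.Nonempty)
    (hJsub : ∀ x ∈ J, MemChainProd d x)
    (hJideal : ∀ x ∈ J, ∀ y : Fin k → ℕ, MemChainProd d y → y ≤ x → y ∈ J)
    (hflag : IsFlagC (facesMd d J)) :
    ∀ x : Fin k → ℕ, (∀ i, 1 ≤ x i ∧ x i ≤ 2) → x ∉ J →
        (∀ y : Fin k → ℕ, (∀ i, 1 ≤ y i ∧ y i ≤ 2) → y ∉ J → y ≤ x → y = x) →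
        (∑ i, (x i - 1)) ≤ 2 := by
  have hd : ∀ i, 1 ≤ d i := fun i => by
    obtain ⟨x, hx⟩ := hJne
    exact le_trans (hJsub x hx i).1 (hJsub x hx i).2
  intro x hx2 hxJ hmin
  have hxval : ∀ i, x i = 1 ∨ x i = 2 := fun i => by have := hx2 i; omega
  obtain ⟨A, hA⟩ : ∃ A, A = Finset.univ.filter (fun i => x i = 2) := ⟨_, rfl⟩
  have hAmem : ∀ i, i ∈ A ↔ x i = 2 := fun i => by simp [hA]
  have hsum : (∑ i, (x i - 1)) = A.card := by
    rw [hA, Finset.card_filter]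
    apply Finset.sum_congr rfl
    intro i _
    rcases hxval i with h | h <;> simp [h]
  rw [hsum]
  by_cases hT : ∀ i ∈ A, (fun j => if j = i then 2 else 1) ∈ J
  · -- main case
    have hdi2 : ∀ i ∈ A, 2 ≤ d i := by
      intro i hi
      have := (hJsub _ (hT i hi) i).2
      simpa using this
    obtain ⟨G, hGdef⟩ : ∃ G, G = A.image (fun i => (d i, i)) := ⟨_, rfl⟩
    have hcard : G.card = A.card := by
      rw [hGdef]
      exact Finset.card_image_of_injOn (fun i _ j _ h => by
        simpa using congrArg Prod.snd h)
    rw [← hcard]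
    apply hflag
    · intro p hp
      simp only [hGdef, Finset.mem_image] at hp
      obtain ⟨i, hi, rfl⟩ := hp
      rw [mem_vertexSet]
      refine ⟨_, hT i hi, mem_facetOf.2 ⟨⟨hd i, le_refl _⟩, ?_⟩⟩
      simp only [if_pos rfl, if_true]
      have := hdi2 i hi
      omega
    · rw [mem_facesMd]
      rintro ⟨z, hz, hsub⟩
      apply hxJ
      apply hJideal z hz
      · intro i
        refine ⟨(hx2 i).1, ?_⟩
        by_cases hi : i ∈ A
        · have := hdi2 i hi; have := (hAmem i).1 hi; omega
        · have hxi1 : x i = 1 := by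
            rcases hxval i with h | h
            · exact h
            · exact absurd ((hAmem i).2 h) hi
          have := hd i
          omega
      · rw [Pi.le_def]
        intro i
        by_cases hi : i ∈ A
        · have hmem : (d i, i) ∈ G := by
            rw [hGdef, Finset.mem_image]
            exact ⟨i, hi, rfl⟩
          have h1 := (mem_facetOf.1 (hsub hmem)).2
          have h2 := (hJsub z hz i).1
          have h3 := (hJsub z hz i).2
          have h4 := (hAmem i).1 hi
          omega
        · have hxi1 : x i = 1 := by
            rcases hxval i with h | h
            · exact h
            · exact absurd ((hAmem i).2 h) hi
          have := (hJsub z hz i).1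
          omega
    · intro G' hG'
      obtain ⟨p, hpG, hpG'⟩ := Finset.exists_of_ssubset hG'
      rw [hGdef, Finset.mem_image] at hpG
      obtain ⟨i, hi, rfl⟩ := hpG
      have hyJ : (fun j => if j = i then 1 else x j) ∈ J := by
        by_contra hy
        have heq := hmin _ (fun j => by
            by_cases h : j = i
            · subst h; simp only [if_pos rfl, if_true]; omega
            · simp only [if_neg h]; exact hx2 j) hy
          (fun j => by
            by_cases h : j = i
            · subst h; simp only [if_pos rfl, if_true]; exact (hx2 j).1
            · simp only [if_neg h]; exact le_refl _)
        have h5 := congrFun heq i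
        simp only [if_pos rfl, if_true] at h5
        have := (hAmem i).1 hi
        omega
      rw [mem_facesMd]
      refine ⟨_, hyJ, fun q hq => ?_⟩
      have hqG := hG'.subset hq
      rw [hGdef, Finset.mem_image] at hqG
      obtain ⟨j, hj, rfl⟩ := hqG
      have hji : j ≠ i := by rintro rfl; exact hpG' hq
      refine mem_facetOf.2 ⟨⟨hd j, le_refl _⟩, ?_⟩
      simp only [if_neg hji]
      have := hdi2 j hj
      have := (hAmem j).1 hj
      omega
  · -- degenerate case: some unit vector not in J
    push_neg at hT
    obtain ⟨i, hiA, hui⟩ := hT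
    have hxiv : x i = 2 := (hAmem i).1 hiA
    have heq := hmin (fun j => if j = i then 2 else 1)
      (fun j => by by_cases h : j = i <;> simp [h]) hui
      (fun j => by
        by_cases h : j = i
        · subst h; simp only [if_pos rfl, if_true]; omega
        · simp only [if_neg h]; exact (hx2 j).1)
    have hxall : ∀ j, x j = if j = i then 2 else 1 := fun j => (congrFun heq j).symm
    have hAi : A = {i} := by
      ext j
      rw [hAmem, Finset.mem_singleton]
      have := hxall j
      by_cases h : j = i
      · simp [h, hxiv]
      · simp only [if_neg h] at this
        simp [h]
        omega
    rw [hAi]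
    simp

-- reverse direction
private lemma aux_partC {k : ℕ} (d : Fin k → ℕ) (J : Finset (Fin k → ℕ))
    (hJne : J.Nonempty)
    (hJsub : ∀ x ∈ J, MemChainProd d x)
    (hJideal : ∀ x ∈ J, ∀ y : Fin k → ℕ, MemChainProd d y → y ≤ x → y ∈ J)
    (ha : ∀ x ∈ J, ∀ i, x i ≤ 2)
    (hflagm : (∀ y : Fin k → ℕ, (∀ i, 1 ≤ y i ∧ y i ≤ 2) → y ∈ J) ∨
      (∀ x : Fin k → ℕ, (∀ i, 1 ≤ x i ∧ x i ≤ 2) → x ∉ J →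
        (∀ y : Fin k → ℕ, (∀ i, 1 ≤ y i ∧ y i ≤ 2) → y ∉ J → y ≤ x → y = x) →
        (∑ i, (x i - 1)) ≤ 2)) :
    IsFlagC (facesMd d J) := by
  have hd : ∀ i, 1 ≤ d i := fun i => by
    obtain ⟨x, hx⟩ := hJne
    exact le_trans (hJsub x hx i).1 (hJsub x hx i).2
  intro G hGsub hGnf hGmin
  suffices h : ∃ N ⊆ G, N ∉ facesMd d J ∧ N.card ≤ 2 by
    obtain ⟨N, hNG, hNnf, hNc⟩ := h
    rcases eq_or_ne N G with rfl | hne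
    · exact hNc
    · exact absurd (hGmin N (hNG.ssubset_of_ne hne)) hNnf
  by_cases hpair : ∃ i : Fin k, (d i, i) ∈ G ∧ (d i - 1, i) ∈ G
  · obtain ⟨i, h1, h2⟩ := hpair
    refine ⟨{(d i, i), (d i - 1, i)}, ?_, ?_, ?_⟩
    · intro p hp
      simp only [Finset.mem_insert, Finset.mem_singleton] at hp
      rcases hp with rfl | rfl <;> assumption
    · rw [mem_facesMd]
      rintro ⟨z, hz, hsub⟩
      have e1 := (mem_facetOf.1 (hsub (Finset.mem_insert_self _ _))).2
      have e2 := mem_facetOf.1 (hsub (Finset.mem_insert_of_mem (Finset.mem_singleton_self _)))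
      have hz1 := (hJsub z hz i).1
      have hz2 := ha z hz i
      have hzd := (hJsub z hz i).2
      obtain ⟨⟨e21, e22⟩, e23⟩ := e2
      omega
    · exact le_trans (Finset.card_insert_le _ _) (by simp)
  · push_neg at hpair
    obtain ⟨A, hA⟩ : ∃ A, A = Finset.univ.filter (fun i => (d i, i) ∈ G) := ⟨_, rfl⟩
    have hAmem : ∀ i, i ∈ A ↔ (d i, i) ∈ G := fun i => by simp [hA]
    have hdi2 : ∀ i ∈ A, 2 ≤ d i := by
      intro i hi
      obtain ⟨z, hz, hv⟩ := mem_vertexSet.1 (hGsub ((hAmem i).1 hi))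
      obtain ⟨⟨hb1, hb2⟩, hb3⟩ := mem_facetOf.1 hv
      have hz1 := (hJsub z hz i).1
      have hzd := (hJsub z hz i).2
      omega
    have hchi : (fun j => if j ∈ A then 2 else 1) ∉ J := by
      intro hmem
      apply hGnf
      rw [mem_facesMd]
      refine ⟨_, hmem, fun p hp => ?_⟩
      obtain ⟨a, i⟩ := p
      obtain ⟨z, hz, hv⟩ := mem_vertexSet.1 (hGsub hp)
      have hbounds := (mem_facetOf.1 hv).1
      refine mem_facetOf.2 ⟨hbounds, ?_⟩
      by_cases hi : i ∈ A
      · simp only [if_pos hi]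
        intro heq
        have hG1 : (d i, i) ∈ G := (hAmem i).1 hi
        have h2d : 2 ≤ d i := hdi2 i hi
        have : a = d i - 1 := by omega
        exact hpair i hG1 (this ▸ hp)
      · simp only [if_neg hi]
        intro heq
        apply hi
        rw [hAmem]
        have : a = d i := by omega
        exact this ▸ hp
    obtain ⟨B, hBA, hBnJ, hBmin⟩ : ∃ B ⊆ A, ((fun j => if j ∈ B then 2 else 1) ∉ J ∧
        ∀ B' ⊆ B, (fun j => if j ∈ B' then 2 else 1) ∉ J → B' = B) := by
      obtain ⟨B, hBmem, hBmin⟩ := Finset.exists_minimal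
        (s := A.powerset.filter (fun B => (fun j => if j ∈ B then 2 else 1) ∉ J))
        ⟨A, by simpa using hchi⟩
      simp only [Finset.mem_filter, Finset.mem_powerset] at hBmem
      refine ⟨B, hBmem.1, hBmem.2, fun B' hB'B hB' => ?_⟩
      by_contra hne
      exact hne (le_antisymm hB'B (hBmin (by
        simp only [Finset.mem_filter, Finset.mem_powerset]
        exact ⟨hB'B.trans hBmem.1, hB'⟩) hB'B))
    have hdB2 : ∀ i ∈ B, 2 ≤ d i := fun i hi => hdi2 i (hBA hi)
    have hBcard : B.card ≤ 2 := by
      rcases hflagm with hall | hmin2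
      · exact absurd (hall _ (fun j => by by_cases h : j ∈ B <;> simp [h])) hBnJ
      · have hsum := hmin2 (fun j => if j ∈ B then 2 else 1)
          (fun j => by by_cases h : j ∈ B <;> simp [h]) hBnJ ?_
        · calc B.card = (Finset.univ.filter (· ∈ B)).card := by
                rw [Finset.filter_univ_mem]
            _ = ∑ j, (if j ∈ B then 1 else 0) := by rw [Finset.card_filter]
            _ = ∑ j, ((if j ∈ B then 2 else 1) - 1) := by
                apply Finset.sum_congr rfl
                intro j _
                by_cases h : j ∈ B <;> simp [h]
            _ ≤ 2 := hsum
        · intro y hy2 hyJ hyle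
          obtain ⟨B', hB'⟩ : ∃ B', B' = Finset.univ.filter (fun j => y j = 2) := ⟨_, rfl⟩
          have hymem : ∀ j, j ∈ B' ↔ y j = 2 := fun j => by simp [hB']
          have hyeq : y = (fun j => if j ∈ B' then 2 else 1) := by
            funext j
            by_cases h : j ∈ B'
            · simp only [if_pos h]; exact (hymem j).1 h
            · simp only [if_neg h]
              have h1 := hy2 j
              have h2 := (hymem j).not.1 h
              omega
          have hB'B : B' ⊆ B := by
            intro j hj
            have h1 := Pi.le_def.mp hyle j
            have h2 := (hymem j).1 hj
            by_contra hjB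
            simp only [if_neg hjB] at h1
            omega
          have := hBmin B' hB'B (by rw [← hyeq]; exact hyJ)
          rw [hyeq, this]
    refine ⟨B.image (fun i => (d i, i)), ?_, ?_, ?_⟩
    · intro p hp
      rw [Finset.mem_image] at hp
      obtain ⟨i, hi, rfl⟩ := hp
      exact (hAmem i).1 (hBA hi)
    · rw [mem_facesMd]
      rintro ⟨z, hz, hsub⟩
      apply hBnJ
      apply hJideal z hz
      · intro j
        by_cases hj : j ∈ B
        · simp only [if_pos hj]
          exact ⟨by omega, hdB2 j hj⟩
        · simp only [if_neg hj]
          exact ⟨le_refl _, hd j⟩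
      · rw [Pi.le_def]
        intro j
        by_cases hj : j ∈ B
        · simp only [if_pos hj]
          have hmem : (d j, j) ∈ B.image (fun i => (d i, i)) :=
            Finset.mem_image_of_mem _ hj
          have h1 := (mem_facetOf.1 (hsub hmem)).2
          have h2 := (hJsub z hz j).1
          have h3 := (hJsub z hz j).2
          omega
        · simp only [if_neg hj]
          exact (hJsub z hz j).1
    · exact le_trans (Finset.card_image_le) hBcard

/-- Let `J` be a nonempty order ideal of the product of chains `C_d`.
Then the simplicial complex `M_d(J)` is flag if and only if `J` is a flag simplicial
complex (an order ideal of `[2]^k` which is flag as a multicomplex). -/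
theorem statement4 {k : ℕ} (d : Fin k → ℕ) (J : Finset (Fin k → ℕ))
    (hJne : J.Nonempty)
    (hJsub : ∀ x ∈ J, MemChainProd d x)
    (hJideal : ∀ x ∈ J, ∀ y : Fin k → ℕ, MemChainProd d y → y ≤ x → y ∈ J) :
    IsFlagC (facesMd d J) ↔ IsFlagMulticomplex J := by
  constructor
  · intro hflag
    exact ⟨aux_partA d J hJne hJsub hJideal hflag,
      Or.inr (aux_partB d J hJne hJsub hJideal hflag)⟩
  · rintro ⟨ha, hflagm⟩
    exact aux_partC d J hJne hJsub hJideal ha hflagm
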